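/- For every integer a ≥ 4, z^{⌈a/2⌉ - 1}(2^a) = 12, while z^{⌈a/2⌉ - 2}(2^a) ≠ 12; that is, 2^a requires exactly ⌈a/2⌉ - 1 iterations of z to reach the fixed point 12. -/

import Mathlib

/-- The order of appearance of `n` in the Fibonacci sequence: the smallest
positive integer `ℓ` such that `n` divides the `ℓ`-th Fibonacci number. -/
noncomputable def z (n : ℕ) : ℕ := sInf {ℓ : ℕ | 0 < ℓ ∧ n ∣ Nat.fib ℓ}

/-!
Since `gcd (fib m) (fib n) = fib (gcd m n)`, the indices `ℓ` with `n ∣ fib ℓ` are exactly the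
multiples of `z n`; hence `z (m * n) = lcm (z m) (z n)` for coprime `m, n`. Together with
`z 3 = 4` and the fact that `fib (3 * 2 ^ k)` is exactly divisible by `2 ^ (k + 2)`, this gives
`z (2 ^ a) = 3 * 2 ^ (a - 2)` and `z (3 * 2 ^ k) = 3 * 2 ^ max (k - 2) 2`: after the first step
every iteration lowers the exponent by two until it reaches the fixed point `12 = 3 * 2 ^ 2`.
-/

open Nat

section OrderOfAppearance

variable {n m ℓ : ℕ}

lemma z_pos_and_dvd_fib (hℓ : 0 < ℓ) (h : n ∣ fib ℓ) : 0 < z n ∧ n ∣ fib (z n) :=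
  Nat.sInf_mem (s := {ℓ | 0 < ℓ ∧ n ∣ fib ℓ}) ⟨ℓ, hℓ, h⟩

lemma z_le (hℓ : 0 < ℓ) (h : n ∣ fib ℓ) : z n ≤ ℓ :=
  Nat.sInf_le ⟨hℓ, h⟩

lemma dvd_fib_iff_z_dvd (hz : 0 < z n) : n ∣ fib ℓ ↔ z n ∣ ℓ := by
  obtain ⟨ℓ₀, hℓ₀, h₀⟩ := Nat.nonempty_of_pos_sInf hz
  have hn : n ∣ fib (z n) := (z_pos_and_dvd_fib hℓ₀ h₀).2
  refine ⟨fun h => ?_, fun h => hn.trans (fib_dvd _ _ h)⟩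
  rcases ℓ.eq_zero_or_pos with rfl | hℓ
  · exact dvd_zero _
  have hgcd : n ∣ fib (Nat.gcd (z n) ℓ) := by
    rw [fib_gcd]
    exact Nat.dvd_gcd hn h
  have hle : z n ≤ Nat.gcd (z n) ℓ := z_le (Nat.gcd_pos_of_pos_right _ hℓ) hgcd
  have hge : Nat.gcd (z n) ℓ ≤ z n := Nat.le_of_dvd hz (Nat.gcd_dvd_left _ _)
  rw [← Nat.gcd_eq_left_iff_dvd]
  omega

lemma z_eq_of_dvd_fib_iff (hm : 0 < m) (h : ∀ ℓ, n ∣ fib ℓ ↔ m ∣ ℓ) : z n = m := by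
  have hmem : n ∣ fib m := (h m).2 dvd_rfl
  obtain ⟨hz, hn⟩ := z_pos_and_dvd_fib hm hmem
  exact le_antisymm (z_le hm hmem) (Nat.le_of_dvd hz ((h _).1 hn))

lemma z_eq_of_minimal (hm : 0 < m) (h : n ∣ fib m)
    (hmin : ∀ ℓ < m, 0 < ℓ → ¬n ∣ fib ℓ) : z n = m := by
  obtain ⟨hz, hn⟩ := z_pos_and_dvd_fib hm h
  by_contra hne
  exact hmin _ (lt_of_le_of_ne (z_le hm h) hne) hz hn

lemma z_mul_of_coprime (hmn : Coprime m n) (hm : 0 < z m) (hn : 0 < z n) :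
    z (m * n) = Nat.lcm (z m) (z n) := by
  refine z_eq_of_dvd_fib_iff (Nat.lcm_pos hm hn) fun ℓ => ?_
  rw [Nat.lcm_dvd_iff, ← dvd_fib_iff_z_dvd hm, ← dvd_fib_iff_z_dvd hn]
  exact ⟨fun h => ⟨dvd_of_mul_right_dvd h, dvd_of_mul_left_dvd h⟩,
    fun h => hmn.mul_dvd_of_dvd_of_dvd h.1 h.2⟩

end OrderOfAppearance

lemma z_two : z 2 = 3 :=
  z_eq_of_minimal (by norm_num) (by decide) (by decide)

lemma z_three : z 3 = 4 :=
  z_eq_of_minimal (by norm_num) (by decide) (by decide)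

lemma two_dvd_fib_iff {n : ℕ} : 2 ∣ fib n ↔ 3 ∣ n := by
  rw [dvd_fib_iff_z_dvd (by rw [z_two]; norm_num), z_two]

lemma fib_three_mul_two_pow {k : ℕ} (hk : 1 ≤ k) :
    ∃ u, Odd u ∧ fib (3 * 2 ^ k) = 2 ^ (k + 2) * u := by
  induction k, hk using Nat.le_induction with
  | base => exact ⟨1, odd_one, by decide⟩
  | succ k hk ih =>
    obtain ⟨u, hu, hfib⟩ := ih
    obtain ⟨m, hm⟩ : ∃ m, 3 * 2 ^ k = m + 1 :=
      ⟨3 * 2 ^ k - 1, by have := Nat.one_le_two_pow (n := k); omega⟩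
    have hodd : Odd (fib m) := by
      rw [Nat.odd_iff, ← Nat.two_dvd_ne_zero, two_dvd_fib_iff]
      omega
    -- `fib (2 * (m + 1)) = fib (m + 1) * (2 * fib m + fib (m + 1))`, and the second factor is
    -- twice an odd number because `4 ∣ fib (m + 1)` while `fib m` is odd.
    refine ⟨u * (2 ^ (k + 1) * u + fib m), hu.mul ?_, ?_⟩
    · exact (Even.mul_right (even_two.pow_of_ne_zero (by omega)) u).add_odd hodd
    · rw [show 3 * 2 ^ (k + 1) = 2 * m + 2 by rw [pow_succ, ← mul_assoc, hm]; ring,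
        Nat.fib_two_mul_add_two, ← hm, hfib]
      ring

lemma le_of_two_pow_dvd_fib_three_mul_two_pow {a j : ℕ} (h : 2 ^ a ∣ fib (3 * 2 ^ j)) :
    a ≤ j + 2 := by
  rcases j.eq_zero_or_pos with rfl | hj
  · have : 2 ^ a ∣ 2 ^ 1 := h
    have := (Nat.pow_dvd_pow_iff_le_right (by norm_num)).1 this
    omega
  · obtain ⟨u, hu, hfib⟩ := fib_three_mul_two_pow hj
    have hcop : Coprime (2 ^ a) u := Nat.Coprime.pow_left _ (Nat.coprime_two_left.2 hu)
    rw [hfib, hcop.dvd_mul_right] at h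
    exact (Nat.pow_dvd_pow_iff_le_right (by norm_num)).1 h

lemma z_two_pow {a : ℕ} (ha : 3 ≤ a) : z (2 ^ a) = 3 * 2 ^ (a - 2) := by
  obtain ⟨u, -, hu⟩ := fib_three_mul_two_pow (k := a - 2) (by omega)
  have hdvd : 2 ^ a ∣ fib (3 * 2 ^ (a - 2)) := ⟨u, by rw [hu, show a - 2 + 2 = a by omega]⟩
  have hz : ∀ ℓ, 2 ^ a ∣ fib ℓ ↔ z (2 ^ a) ∣ ℓ := fun _ =>
    dvd_fib_iff_z_dvd (z_pos_and_dvd_fib (by positivity) hdvd).1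
  have hfib : 2 ^ a ∣ fib (z (2 ^ a)) := (hz _).2 dvd_rfl
  -- `z (2 ^ a)` is a multiple of `z 2 = 3` dividing `3 * 2 ^ (a - 2)`, so it is some `3 * 2 ^ j`.
  obtain ⟨e, he⟩ : 3 ∣ z (2 ^ a) := two_dvd_fib_iff.1 ((dvd_pow_self 2 (by omega)).trans hfib)
  have he_dvd : e ∣ 2 ^ (a - 2) :=
    Nat.dvd_of_mul_dvd_mul_left (by norm_num) (he ▸ (hz _).1 hdvd)
  obtain ⟨j, hj, rfl⟩ := (Nat.dvd_prime_pow Nat.prime_two).1 he_dvd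
  rw [he] at hfib ⊢
  have := le_of_two_pow_dvd_fib_three_mul_two_pow hfib
  rw [show j = a - 2 by omega]

lemma z_three_mul_two_pow {k : ℕ} (hk : 3 ≤ k) : z (3 * 2 ^ k) = 3 * 2 ^ max (k - 2) 2 := by
  have h2 := z_two_pow hk
  rw [z_mul_of_coprime (Nat.Coprime.pow_right _ (by norm_num)) (by rw [z_three]; norm_num)
    (by rw [h2]; positivity), z_three, h2]
  rcases (show k = 3 ∨ 4 ≤ k by omega) with rfl | hk4
  · norm_num
  · rw [Nat.lcm_eq_right, max_eq_left (by omega)]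
    exact Dvd.dvd.mul_left (pow_dvd_pow 2 (by omega) : 2 ^ 2 ∣ 2 ^ (k - 2)) 3

lemma iterate_z_three_mul_two_pow {i k : ℕ} (hk : 2 ≤ k) (hi : 2 * i < k) :
    z^[i] (3 * 2 ^ k) = 3 * 2 ^ max (k - 2 * i) 2 := by
  induction i generalizing k with
  | zero => rw [Function.iterate_zero_apply, Nat.mul_zero, Nat.sub_zero, max_eq_left hk]
  | succ i ih =>
    rw [Function.iterate_succ_apply, z_three_mul_two_pow (by omega),
      ih (le_max_right _ _) (by omega)]
    congr 2
    omega

lemma iterate_succ_z_two_pow {i k : ℕ} (hk : 2 ≤ k) (hi : 2 * i < k) :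
    z^[i + 1] (2 ^ (k + 2)) = 3 * 2 ^ max (k - 2 * i) 2 := by
  rw [Function.iterate_succ_apply, z_two_pow (by omega), Nat.add_sub_cancel,
    iterate_z_three_mul_two_pow hk hi]

theorem two_pow_exact_iterations (a : ℕ) (ha : 4 ≤ a) :
    z^[(a + 1) / 2 - 1] (2 ^ a) = 12 ∧ z^[(a + 1) / 2 - 2] (2 ^ a) ≠ 12 := by
  obtain ⟨k, rfl⟩ : ∃ k, a = k + 2 := ⟨a - 2, by omega⟩
  constructor
  · rw [show (k + 2 + 1) / 2 - 1 = (k + 3) / 2 - 2 + 1 by omega,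
      iterate_succ_z_two_pow (by omega) (by omega),
      show max (k - 2 * ((k + 3) / 2 - 2)) 2 = 2 by omega]
    rfl
  · rcases (show k = 2 ∨ 3 ≤ k by omega) with rfl | hk
    · norm_num
    rw [show (k + 2 + 1) / 2 - 2 = (k + 3) / 2 - 3 + 1 by omega,
      iterate_succ_z_two_pow (by omega) (by omega)]
    have hexp : max (k - 2 * ((k + 3) / 2 - 3)) 2 ≠ 2 := by omega
    have := (Nat.pow_right_injective le_rfl).ne hexp
    omega
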